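/- Let P be a deterministic comparison matrix for N = 2^n players, σ a draw, and i* a player with wp(i*,P,σ) = 1. Let S be a finite set of unordered pairs of distinct players, and for ε ∈ [0,1] let P_S(ε) be obtained from P by changing, for each pair {a,b} ∈ S with winner w and loser l, the entries to P_wl = 1 − ε and P_lw = ε. Let c be the number of crucial pairs contained in S. Then ε ↦ wp(i*, P_S(ε), σ) is a polynomial function of ε with wp(i*, P_S(0), σ) = 1 and derivative at ε = 0 equal to −c; equivalently, wp(i*, P_S(ε), σ) = 1 − c·ε + ε²·Q(ε) for some polynomial Q. -/

import Mathlib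

/-- A perfect (balanced) binary tree of depth `n` with leaves labelled by `α`. -/
inductive BT (α : Type) : ℕ → Type
  | leaf : α → BT α 0
  | node {n : ℕ} : BT α n → BT α n → BT α (n + 1)

namespace BT

/-- The list of leaf labels, from left to right. -/
def leaves {α : Type} : ∀ {n : ℕ}, BT α n → List α
  | _, .leaf a => [a]
  | _, .node L R => L.leaves ++ R.leaves

/-- Relabel the leaves of a tree. -/
def map {α β : Type} (f : α → β) : ∀ {n : ℕ}, BT α n → BT β n
  | _, .leaf a => .leaf (f a)
  | _, .node L R => .node (L.map f) (R.map f)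

end BT

/-- Two trees represent the same draw iff one can be obtained from the other by
swapping the two children subtrees at internal nodes. -/
def BTequiv {α : Type} : ∀ {n : ℕ}, BT α n → BT α n → Prop
  | 0, .leaf a, .leaf b => a = b
  | _ + 1, .node L R, .node L' R' =>
      (BTequiv L L' ∧ BTequiv R R') ∨ (BTequiv L R' ∧ BTequiv R L')

/-- A draw: each of the `N` players occurs exactly once among the leaves. -/
def IsDraw {N n : ℕ} (t : BT (Fin N) n) : Prop :=
  ∀ i : Fin N, t.leaves.count i = 1

/-- The winning distribution of a knockout tournament: `wd P t i` is the probability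
that player `i` wins the (sub)tournament with draw `t` and comparison matrix `P`. -/
noncomputable def wd {N : ℕ} (P : Fin N → Fin N → ℝ) :
    ∀ {n : ℕ}, BT (Fin N) n → Fin N → ℝ
  | _, .leaf j => fun i => if i = j then 1 else 0
  | _, .node L R => fun i =>
      wd P L i * (∑ j, wd P R j * P i j) + wd P R i * (∑ j, wd P L j * P i j)

/-- `P` is a comparison matrix. -/
def IsCompMatrix {N : ℕ} (P : Fin N → Fin N → ℝ) : Prop :=
  ∀ i j : Fin N, i ≠ j → 0 ≤ P i j ∧ P i j ≤ 1 ∧ P i j + P j i = 1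

/-- `P` is deterministic: every off-diagonal entry is 0 or 1. -/
def IsDet {N : ℕ} (P : Fin N → Fin N → ℝ) : Prop :=
  ∀ i j : Fin N, i ≠ j → P i j = 0 ∨ P i j = 1

/-- The set `𝒫(P,ε)` of ε-perturbations of `P`. -/
def perturbs {N : ℕ} (P : Fin N → Fin N → ℝ) (ε : ℝ) : Set (Fin N → Fin N → ℝ) :=
  {P' | IsCompMatrix P' ∧ ∀ i j : Fin N, i ≠ j → |P' i j - P i j| ≤ ε}

/-- The ε-guaranteed winning probability `wp_ε(i,P,σ)`. -/
noncomputable def wpe {N n : ℕ} (i : Fin N) (P : Fin N → Fin N → ℝ) (ε : ℝ)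
    (t : BT (Fin N) n) : ℝ :=
  sInf ((fun P' => wd P' t i) '' perturbs P ε)

/-- The comparison matrix of the hard `n`-round tournament `H_n` (players 0-indexed):
for `i < j`, player `i` beats player `j` iff `i = j - 2 ^ v` where `2 ^ v` is the largest
power of 2 dividing `j` (in 0-indexed numbering). -/
noncomputable def hardP (n : ℕ) : Fin (2 ^ n) → Fin (2 ^ n) → ℝ := fun i j =>
  if i = j then 0
  else if (i : ℕ) < (j : ℕ) then
    (if (i : ℕ) + 2 ^ padicValNat 2 (j : ℕ) = (j : ℕ) then 1 else 0)
  else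
    (if (j : ℕ) + 2 ^ padicValNat 2 (i : ℕ) = (i : ℕ) then 0 else 1)

/-- The tree of depth `n` whose leaves are `s, s+1, …, s + 2^n - 1` from left to right. -/
def ordTree : (n : ℕ) → ℕ → BT ℕ n
  | 0, s => .leaf s
  | n + 1, s => .node (ordTree n s) (ordTree n (s + 2 ^ n))

/-- The identity draw, placing players `0, 1, …, 2^n - 1` on the leaves in order. -/
def idDraw (n : ℕ) : BT (Fin (2 ^ n)) n :=
  (ordTree n 0).map (fun k => ⟨k % 2 ^ n, Nat.mod_lt _ (by positivity)⟩)

/-- `f_p(x,y) = p(x+y) + (1-2p)xy`. -/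
def fp (p x y : ℝ) : ℝ := p * (x + y) + (1 - 2 * p) * x * y

/-- `B_p` on trees with real leaf labels. -/
noncomputable def Bp (p : ℝ) : ∀ {n : ℕ}, BT ℝ n → ℝ
  | _, .leaf x => x
  | _, .node L R => fp p (Bp p L) (Bp p R)

/-- Group a list into consecutive pairs. -/
def pairList {α : Type} : List α → List (α × α)
  | a :: b :: rest => (a, b) :: pairList rest
  | _ => []

/-- The first-round matches of a draw: the consecutive sibling pairs of leaves. -/
def firstPairs {α : Type} {n : ℕ} (t : BT α n) : List (α × α) := pairList t.leaves

/-- A draw is mixed (w.r.t. the set `B` of big players) if every first-round match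
pairs a big player with a small player. -/
def MixedDraw {N n : ℕ} (B : Finset (Fin N)) (t : BT (Fin N) n) : Prop :=
  ∀ q ∈ firstPairs t, ((q.1 ∈ B) ↔ q.2 ∉ B)

/-- Number of leaves labelled `1`. -/
noncomputable def ones {n : ℕ} (t : BT ℝ n) : ℕ := t.leaves.count 1

/-- All leaf labels are `0` or `1`. -/
def ZeroOne {n : ℕ} (t : BT ℝ n) : Prop := ∀ x ∈ t.leaves, x = 0 ∨ x = 1

/-- `P[kl←t]`: the matrix agreeing with `P` except `P k l = t` and `P l k = 1 - t`. -/
def updPair {N : ℕ} (P : Fin N → Fin N → ℝ) (k l : Fin N) (t : ℝ) :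
    Fin N → Fin N → ℝ :=
  fun i j => if i = k ∧ j = l then t else if i = l ∧ j = k then 1 - t else P i j

/-- Perturb a deterministic matrix: for each pair `(w, l) ∈ S` (winner first),
set `P w l = 1 - ε` and `P l w = ε`; other entries unchanged. -/
def detPerturb {N : ℕ} (P : Fin N → Fin N → ℝ) (S : Finset (Fin N × Fin N)) (ε : ℝ) :
    Fin N → Fin N → ℝ :=
  fun i j => if (i, j) ∈ S then 1 - ε else if (j, i) ∈ S then ε else P i j

/-- Swap the result of the single match between `a` and `b`. -/
def swapPair {N : ℕ} (P : Fin N → Fin N → ℝ) (a b : Fin N) : Fin N → Fin N → ℝ :=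
  fun i j => if i = a ∧ j = b then P b a else if i = b ∧ j = a then P a b else P i j

/-- The pair `(a,b)` (with `a` the winner) is crucial for `i` in `C(P,σ)`. -/
def Crucial {N n : ℕ} (P : Fin N → Fin N → ℝ) (σ : BT (Fin N) n) (i : Fin N)
    (a b : Fin N) : Prop :=
  a ≠ b ∧ P a b = 1 ∧ wd (swapPair P a b) σ i = 0


/-! Because a draw lists every player once, two given players can meet only at one node of the
tree, so the winning distribution is an affine function of the result `s` of any single match.
Writing `f s` for it, `f (1 - ε) = f 1 + ε (f 0 - f 1)`; perturbing the matches of `S` one at a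
time, induction on `S` gives `wd P + ε ∑_{q ∈ S} (wd (swap_q P) - wd P)` up to `ε²` times a
polynomial. For deterministic `P` the swapped tournament is again deterministic, so its winning
distribution is a point mass and `wd (swap_q P) σ i*` is `0` if `q` is crucial and `1` otherwise. -/

open Polynomial

theorem IsDraw.nodup_leaves {N n : ℕ} {t : BT (Fin N) n} (ht : IsDraw t) : t.leaves.Nodup :=
  List.nodup_iff_count_le_one.2 fun i => (ht i).le

section WinningDistribution

variable {N : ℕ}

theorem wd_eq_zero_of_notMem_leaves (P : Fin N → Fin N → ℝ) {n : ℕ} {t : BT (Fin N) n}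
    {i : Fin N} (hi : i ∉ t.leaves) : wd P t i = 0 := by
  induction t with
  | leaf j => simp_all [wd, BT.leaves]
  | node L R ihL ihR =>
    simp only [BT.leaves, List.mem_append, not_or] at hi
    simp [wd, ihL hi.1, ihR hi.2]

theorem sum_wd_mul_congr (P : Fin N → Fin N → ℝ) {n : ℕ} (t : BT (Fin N) n)
    {f g : Fin N → ℝ} (h : ∀ j ∈ t.leaves, f j = g j) :
    ∑ j, wd P t j * f j = ∑ j, wd P t j * g j := by
  refine Finset.sum_congr rfl fun j _ => ?_
  by_cases hj : j ∈ t.leaves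
  · rw [h j hj]
  · simp [wd_eq_zero_of_notMem_leaves P hj]

theorem wd_congr_of_leaves {P P' : Fin N → Fin N → ℝ} {n : ℕ} {t : BT (Fin N) n}
    (h : ∀ x ∈ t.leaves, ∀ y ∈ t.leaves, P x y = P' x y) : wd P t = wd P' t := by
  induction t with
  | leaf j => rfl
  | node L R ihL ihR =>
    simp only [BT.leaves, List.mem_append] at h
    have hL := ihL fun x hx y hy => h x (.inl hx) y (.inl hy)
    have hR := ihR fun x hx y hy => h x (.inr hx) y (.inr hy)
    funext i
    by_cases hi : i ∈ (BT.node L R).leaves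
    · simp only [BT.leaves, List.mem_append] at hi
      simp only [wd, hL, hR]
      rw [sum_wd_mul_congr P' R fun j hj => h i hi j (.inr hj),
        sum_wd_mul_congr P' L fun j hj => h i hi j (.inl hj)]
    · rw [wd_eq_zero_of_notMem_leaves P hi, wd_eq_zero_of_notMem_leaves P' hi]

theorem wd_node_comm (P : Fin N → Fin N → ℝ) {n : ℕ} (L R : BT (Fin N) n) :
    wd P (.node L R) = wd P (.node R L) := by
  funext i
  exact add_comm _ _

end WinningDistribution

def IsAffine (f : ℝ → ℝ) : Prop := ∃ c d : ℝ, ∀ s, f s = c + d * s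

namespace IsAffine

variable {f g : ℝ → ℝ}

theorem const (c : ℝ) : IsAffine fun _ => c := ⟨c, 0, fun _ => by ring⟩

theorem add (hf : IsAffine f) (hg : IsAffine g) : IsAffine fun s => f s + g s := by
  obtain ⟨c, d, hf⟩ := hf
  obtain ⟨c', d', hg⟩ := hg
  exact ⟨c + c', d + d', fun s => by simp only [hf, hg]; ring⟩

theorem const_mul (hf : IsAffine f) (c : ℝ) : IsAffine fun s => c * f s := by
  obtain ⟨a, d, hf⟩ := hf
  exact ⟨c * a, c * d, fun s => by simp only [hf]; ring⟩

theorem mul_const (hf : IsAffine f) (c : ℝ) : IsAffine fun s => f s * c := by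
  simpa only [mul_comm _ c] using hf.const_mul c

theorem sum {ι : Type*} [Fintype ι] {f : ι → ℝ → ℝ} (h : ∀ j, IsAffine (f j)) :
    IsAffine fun s => ∑ j, f j s := by
  choose c d hcd using h
  exact ⟨∑ j, c j, ∑ j, d j, fun s => by simp only [hcd, Finset.sum_add_distrib, Finset.sum_mul]⟩

theorem apply_one_sub (hf : IsAffine f) (ε : ℝ) : f (1 - ε) = f 1 + ε * (f 0 - f 1) := by
  obtain ⟨c, d, hf⟩ := hf
  simp only [hf]
  ring

end IsAffine

section UpdatePair

variable {N : ℕ} (M : Fin N → Fin N → ℝ) (a b : Fin N)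

theorem updPair_apply_of_left_ne {i : Fin N} (hia : i ≠ a) (hib : i ≠ b) (s : ℝ) (j : Fin N) :
    updPair M a b s i j = M i j := by
  simp [updPair, hia, hib]

theorem updPair_apply_of_right_ne {j : Fin N} (hja : j ≠ a) (hjb : j ≠ b) (s : ℝ) (i : Fin N) :
    updPair M a b s i j = M i j := by
  simp [updPair, hja, hjb]

theorem isAffine_updPair_apply (i j : Fin N) : IsAffine fun s => updPair M a b s i j := by
  unfold updPair
  split_ifs
  · exact ⟨0, 1, fun s => by ring⟩
  · exact ⟨1, -1, fun s => by ring⟩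
  · exact IsAffine.const _

theorem wd_updPair_of_not_both_mem {n : ℕ} {t : BT (Fin N) n}
    (h : ¬(a ∈ t.leaves ∧ b ∈ t.leaves)) (s : ℝ) : wd (updPair M a b s) t = wd M t :=
  wd_congr_of_leaves fun x hx y hy => by
    unfold updPair
    split_ifs with h₁ h₂
    · exact absurd ⟨h₁.1 ▸ hx, h₁.2 ▸ hy⟩ h
    · exact absurd ⟨h₂.2 ▸ hy, h₂.1 ▸ hx⟩ h
    · rfl

variable {M a b}

theorem isAffine_wd_updPair_node_of_notMem_right {n : ℕ} {L R : BT (Fin N) n}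
    (haR : a ∉ R.leaves) (hbR : b ∉ R.leaves)
    (hL : ∀ j, IsAffine fun s => wd (updPair M a b s) L j) (i : Fin N) :
    IsAffine fun s => wd (updPair M a b s) (.node L R) i := by
  have hR := wd_updPair_of_not_both_mem M a b fun h => haR h.1
  have hLR : ∀ s, ∑ j, wd M R j * updPair M a b s i j = ∑ j, wd M R j * M i j := fun s =>
    sum_wd_mul_congr M R fun j hj =>
      updPair_apply_of_right_ne M a b (ne_of_mem_of_not_mem hj haR)
        (ne_of_mem_of_not_mem hj hbR) s i
  have hRL : ∀ s, wd M R i * ∑ j, wd (updPair M a b s) L j * updPair M a b s i j =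
      wd M R i * ∑ j, wd (updPair M a b s) L j * M i j := by
    intro s
    by_cases hi : i ∈ R.leaves
    · simp only [updPair_apply_of_left_ne M a b (ne_of_mem_of_not_mem hi haR)
        (ne_of_mem_of_not_mem hi hbR)]
    · simp [wd_eq_zero_of_notMem_leaves M hi]
  simp only [wd, hR, hLR, hRL]
  exact ((hL i).mul_const _).add ((IsAffine.sum fun j => (hL j).mul_const (M i j)).const_mul _)

theorem isAffine_wd_updPair {n : ℕ} {t : BT (Fin N) n} (ht : t.leaves.Nodup) (i : Fin N) :
    IsAffine fun s => wd (updPair M a b s) t i := by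
  induction t generalizing i with
  | leaf j => exact IsAffine.const _
  | node L R ihL ihR =>
    obtain ⟨hL, hR, hLR⟩ := List.nodup_append.1 ht
    by_cases habL : a ∈ L.leaves ∧ b ∈ L.leaves
    · exact isAffine_wd_updPair_node_of_notMem_right (fun h => hLR a habL.1 a h rfl)
        (fun h => hLR b habL.2 b h rfl) (ihL hL) i
    by_cases habR : a ∈ R.leaves ∧ b ∈ R.leaves
    · simp only [wd_node_comm _ L R]
      exact isAffine_wd_updPair_node_of_notMem_right (fun h => hLR a h a habR.1 rfl)
        (fun h => hLR b h b habR.2 rfl) (ihR hR) i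
    simp only [wd, wd_updPair_of_not_both_mem M a b habL,
      wd_updPair_of_not_both_mem M a b habR]
    have hentry := isAffine_updPair_apply M a b i
    exact ((IsAffine.sum fun j => (hentry j).const_mul _).const_mul _).add
      ((IsAffine.sum fun j => (hentry j).const_mul _).const_mul _)

end UpdatePair

section Perturbation

variable {N : ℕ} {P : Fin N → Fin N → ℝ} {a b : Fin N}

theorem swapPair_apply_of_ne {i j : Fin N} (h₁ : (i, j) ≠ (a, b)) (h₂ : (i, j) ≠ (b, a)) :
    swapPair P a b i j = P i j := by
  simp only [ne_eq, Prod.ext_iff, not_and] at h₁ h₂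
  simp only [swapPair]
  split_ifs with k₁ k₂
  · exact absurd k₁.2 (h₁ k₁.1)
  · exact absurd k₂.2 (h₂ k₂.1)
  · rfl

theorem updPair_one_eq_self (hab : P a b = 1) (hba : P b a = 0) : updPair P a b 1 = P := by
  funext i j
  unfold updPair
  split_ifs with h₁ h₂
  · rw [h₁.1, h₁.2, hab]
  · rw [h₂.1, h₂.2, hba, sub_self]
  · rfl

theorem updPair_zero_eq_swapPair (hab : P a b = 1) (hba : P b a = 0) :
    updPair P a b 0 = swapPair P a b := by
  funext i j
  unfold updPair swapPair
  split_ifs with h₁ h₂ <;> simp_all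

theorem detPerturb_empty (ε : ℝ) : detPerturb P ∅ ε = P := by
  funext i j
  simp [detPerturb]

theorem detPerturb_insert {S : Finset (Fin N × Fin N)} (hab : a ≠ b) (hba : (b, a) ∉ S)
    (ε : ℝ) : detPerturb P (insert (a, b) S) ε = updPair (detPerturb P S ε) a b (1 - ε) := by
  funext i j
  unfold detPerturb updPair
  by_cases h₁ : i = a ∧ j = b
  · simp [h₁]
  by_cases h₂ : i = b ∧ j = a
  · simp [h₂, hab, hab.symm, hba]
  have h₂' : ¬(j = a ∧ i = b) := fun h => h₂ ⟨h.2, h.1⟩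
  simp only [Finset.mem_insert, Prod.ext_iff, h₁, h₂, h₂', false_or, if_false]

theorem updPair_detPerturb {S : Finset (Fin N × Fin N)} (hab : (a, b) ∉ S) (hba : (b, a) ∉ S)
    (ε t : ℝ) : updPair (detPerturb P S ε) a b t = detPerturb (updPair P a b t) S ε := by
  funext i j
  unfold detPerturb updPair
  split_ifs <;> simp_all

end Perturbation

theorem exists_wd_detPerturb_eq {N n : ℕ} {σ : BT (Fin N) n} (hσ : σ.leaves.Nodup) (i : Fin N)
    (S : Finset (Fin N × Fin N)) (P : Fin N → Fin N → ℝ)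
    (hS : ∀ q ∈ S, P q.1 q.2 = 1 ∧ P q.2 q.1 = 0) :
    ∃ Q : ℝ[X], ∀ ε, wd (detPerturb P S ε) σ i =
      wd P σ i + (∑ q ∈ S, (wd (swapPair P q.1 q.2) σ i - wd P σ i)) * ε + ε ^ 2 * Q.eval ε := by
  induction S using Finset.induction_on generalizing P with
  | empty => exact ⟨0, fun ε => by simp [detPerturb_empty]⟩
  | @insert q S hq ih =>
    obtain ⟨a, b⟩ := q
    obtain ⟨hab, hba⟩ := hS (a, b) (Finset.mem_insert_self _ _)
    have hS' : ∀ q ∈ S, P q.1 q.2 = 1 ∧ P q.2 q.1 = 0 := fun q hq' => hS q (by simp [hq'])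
    have hbaS : (b, a) ∉ S := fun h => by simpa [hba] using (hS' _ h).1
    have hne : a ≠ b := fun h => by simp_all
    have hswap : ∀ q ∈ S, swapPair P a b q.1 q.2 = 1 ∧ swapPair P a b q.2 q.1 = 0 := by
      rintro ⟨x, y⟩ hxy
      have h₁ : (x, y) ≠ (a, b) := ne_of_mem_of_not_mem hxy hq
      have h₂ : (x, y) ≠ (b, a) := ne_of_mem_of_not_mem hxy hbaS
      have h₁' : (y, x) ≠ (b, a) := by simpa [and_comm] using h₁
      have h₂' : (y, x) ≠ (a, b) := by simpa [and_comm] using h₂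
      rw [swapPair_apply_of_ne h₁ h₂, swapPair_apply_of_ne h₂' h₁']
      exact hS' _ hxy
    obtain ⟨Q₁, hQ₁⟩ := ih P hS'
    obtain ⟨Q₂, hQ₂⟩ := ih (swapPair P a b) hswap
    refine ⟨Q₁ + C (∑ q ∈ S, (wd (swapPair (swapPair P a b) q.1 q.2) σ i -
        wd (swapPair P a b) σ i) - ∑ q ∈ S, (wd (swapPair P q.1 q.2) σ i - wd P σ i)) +
        X * (Q₂ - Q₁), fun ε => ?_⟩
    rw [detPerturb_insert hne hbaS, (isAffine_wd_updPair hσ i).apply_one_sub ε,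
      updPair_detPerturb hq hbaS ε 1, updPair_detPerturb hq hbaS ε 0, updPair_one_eq_self hab hba,
      updPair_zero_eq_swapPair hab hba, hQ₁, hQ₂, Finset.sum_insert hq]
    simp only [eval_add, eval_C, eval_mul, eval_X, eval_sub]
    ring

section Deterministic

variable {N : ℕ} {P : Fin N → Fin N → ℝ}

theorem wd_node_eq_single {n : ℕ} {L R : BT (Fin N) n} {u v : Fin N}
    (hu : wd P L = Pi.single u 1) (hv : wd P R = Pi.single v 1) (huv : P u v = 1)
    (hvu : P v u = 0) : wd P (.node L R) = Pi.single u 1 := by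
  have hne : u ≠ v := by rintro rfl; simp_all
  funext i
  by_cases hiu : i = u
  · subst hiu; simp [wd, hu, hv, Pi.single_apply, hne, huv]
  by_cases hiv : i = v
  · subst hiv; simp [wd, hu, hv, Pi.single_apply, hiu, hvu]
  simp [wd, hu, hv, hiu, hiv]

theorem exists_wd_eq_single_of_isDet (hP : IsCompMatrix P) (hdet : IsDet P) {n : ℕ}
    {t : BT (Fin N) n} (ht : t.leaves.Nodup) : ∃ w ∈ t.leaves, wd P t = Pi.single w 1 := by
  induction t with
  | leaf j => exact ⟨j, by simp [BT.leaves], funext fun i => by simp [wd, Pi.single_apply]⟩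
  | node L R ihL ihR =>
    obtain ⟨hL, hR, hLR⟩ := List.nodup_append.1 ht
    obtain ⟨u, huL, hu⟩ := ihL hL
    obtain ⟨v, hvR, hv⟩ := ihR hR
    have huv : u ≠ v := hLR u huL v hvR
    have hcomp := (hP u v huv).2.2
    rcases hdet u v huv with h | h
    · refine ⟨v, by simp [BT.leaves, hvR], ?_⟩
      rw [wd_node_comm]
      exact wd_node_eq_single hv hu (by linarith) h
    · exact ⟨u, by simp [BT.leaves, huL], wd_node_eq_single hu hv h (by linarith)⟩

theorem wd_eq_zero_or_eq_one_of_isDet (hP : IsCompMatrix P) (hdet : IsDet P) {n : ℕ}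
    {t : BT (Fin N) n} (ht : t.leaves.Nodup) (i : Fin N) : wd P t i = 0 ∨ wd P t i = 1 := by
  obtain ⟨w, -, hw⟩ := exists_wd_eq_single_of_isDet hP hdet ht
  rw [hw, Pi.single_apply]
  split_ifs <;> simp

theorem IsCompMatrix.swapPair (hP : IsCompMatrix P) (a b : Fin N) :
    IsCompMatrix (swapPair P a b) := by
  intro i j hij
  unfold _root_.swapPair
  split_ifs <;> grind [IsCompMatrix]

theorem IsDet.swapPair (hP : IsDet P) (a b : Fin N) : IsDet (swapPair P a b) := by
  intro i j hij
  unfold _root_.swapPair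
  split_ifs <;> grind [IsDet]

open Classical in
theorem wd_swapPair_sub_eq_neg_ite (hP : IsCompMatrix P) (hdet : IsDet P) {n : ℕ}
    {σ : BT (Fin N) n} (hσ : σ.leaves.Nodup) {i a b : Fin N} (hwin : wd P σ i = 1)
    (hab : a ≠ b) (h : P a b = 1) :
    wd (swapPair P a b) σ i - wd P σ i = -if Crucial P σ i a b then 1 else 0 := by
  rw [hwin]
  split_ifs with hc
  · rw [hc.2.2]; ring
  · rcases wd_eq_zero_or_eq_one_of_isDet (hP.swapPair a b) (hdet.swapPair a b) hσ i with h₀ | h₁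
    · exact absurd ⟨hab, h, h₀⟩ hc
    · rw [h₁]; ring

end Deterministic

/-- perturbing the matches in `S` from `(0,1)` to `(ε, 1-ε)`, where
`c` of them are crucial, gives winning probability `1 - cε + ε² Q(ε)`. -/
theorem det_perturbation_linear_term (n : ℕ)
    (P : Fin (2 ^ n) → Fin (2 ^ n) → ℝ) (hP : IsCompMatrix P) (hdet : IsDet P)
    (σ : BT (Fin (2 ^ n)) n) (hσ : IsDraw σ)
    (istar : Fin (2 ^ n)) (hwin : wd P σ istar = 1)
    (S : Finset (Fin (2 ^ n) × Fin (2 ^ n)))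
    (hS : ∀ q ∈ S, q.1 ≠ q.2 ∧ P q.1 q.2 = 1) :
    ∃ Q : Polynomial ℝ, ∀ ε ∈ Set.Icc (0 : ℝ) 1,
      wd (detPerturb P S ε) σ istar =
        1 - ({q : Fin (2 ^ n) × Fin (2 ^ n) |
                q ∈ S ∧ Crucial P σ istar q.1 q.2}.ncard : ℝ) * ε +
          ε ^ 2 * Q.eval ε := by
  classical
  have hnd := hσ.nodup_leaves
  have hS' : ∀ q ∈ S, P q.1 q.2 = 1 ∧ P q.2 q.1 = 0 := fun q hq =>
    ⟨(hS q hq).2, by linarith [(hP _ _ (hS q hq).1).2.2, (hS q hq).2]⟩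
  have hcrucial : {q | q ∈ S ∧ Crucial P σ istar q.1 q.2} =
      ↑(S.filter fun q => Crucial P σ istar q.1 q.2) := by
    ext; simp
  obtain ⟨Q, hQ⟩ := exists_wd_detPerturb_eq hnd istar S P hS'
  refine ⟨Q, fun ε _ => ?_⟩
  rw [hQ, Finset.sum_congr rfl fun q hq =>
      wd_swapPair_sub_eq_neg_ite hP hdet hnd hwin (hS q hq).1 (hS q hq).2,
    Finset.sum_neg_distrib, Finset.sum_boole, hcrucial, Set.ncard_coe_finset, hwin]
  ring
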